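/- arXiv:2307.09672 — 6 statements merged into one kernel-verified Lean document; each statement's English description precedes it below -/
import Mathlib

section
/- If X = (x_i)_{i∈I} is a finite collection of vectors in ℝ^n and the sub-collection (x_i)_{i ∈ I_x^α}, where I_x^α = {i : ⟨x, x_i⟩ ≥ α_i}, spans ℝ^n for every x in the closed ball B_r, then the ReLU-layer map C_α(x) = (max(0, ⟨x, x_i⟩ − α_i))_{i∈I} is injective on B_r. -/
open RealInnerProductSpace

/-- If the sub-collection of frame elements active at each `x` in the closed ball of
radius `r` spans `ℝ^n`, then the ReLU-layer `C_α` is injective on that ball. -/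
theorem stmt_0 (n m : ℕ) (x : Fin m → EuclideanSpace ℝ (Fin n)) (α : Fin m → ℝ)
    (r : ℝ) (hr : 0 < r)
    (hrect : ∀ v : EuclideanSpace ℝ (Fin n), ‖v‖ ≤ r →
      Submodule.span ℝ {w | ∃ i, w = x i ∧ ⟪v, x i⟫ ≥ α i} = ⊤) :
    Set.InjOn (fun v : EuclideanSpace ℝ (Fin n) => fun i : Fin m => max 0 (⟪v, x i⟫ - α i))
      {v | ‖v‖ ≤ r} := by
  intro u hu v hv h
  simp only [Set.mem_setOf_eq] at hu hv
  set w : EuclideanSpace ℝ (Fin n) := (2⁻¹ : ℝ) • (u + v) with hw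
  have hwr : ‖w‖ ≤ r := by
    have h1 : ‖w‖ = 2⁻¹ * ‖u + v‖ := by
      rw [hw, norm_smul]; norm_num
    have h2 : ‖u + v‖ ≤ ‖u‖ + ‖v‖ := norm_add_le u v
    rw [h1]; linarith
  have key : ∀ i, ⟪w, x i⟫ ≥ α i → ⟪u - v, x i⟫ = 0 := by
    intro i hi
    have hwi : ⟪w, x i⟫ = 2⁻¹ * (⟪u, x i⟫ + ⟪v, x i⟫) := by
      rw [hw, real_inner_smul_left, inner_add_left]
    rw [hwi] at hi
    have hsum : ⟪u, x i⟫ + ⟪v, x i⟫ ≥ 2 * α i := by linarith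
    have hmax : max 0 (⟪u, x i⟫ - α i) = max 0 (⟪v, x i⟫ - α i) := congrFun h i
    rw [inner_sub_left]
    rcases le_total (⟪u, x i⟫ - α i) 0 with ha | ha <;>
      rcases le_total (⟪v, x i⟫ - α i) 0 with hb | hb
    · rw [max_eq_left ha, max_eq_left hb] at hmax; linarith
    · rw [max_eq_left ha, max_eq_right hb] at hmax; linarith
    · rw [max_eq_right ha, max_eq_left hb] at hmax; linarith
    · rw [max_eq_right ha, max_eq_right hb] at hmax; linarith
  have hspan := hrect w hwr
  have horth : ∀ z ∈ Submodule.span ℝ {w' | ∃ i, w' = x i ∧ ⟪w, x i⟫ ≥ α i},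
      ⟪u - v, z⟫ = 0 := by
    intro z hz
    induction hz using Submodule.span_induction with
    | mem z hz => obtain ⟨i, rfl, hi⟩ := hz; exact key i hi
    | zero => simp
    | add _ _ _ _ h1 h2 => rw [inner_add_right, h1, h2]; ring
    | smul c _ _ h1 => rw [real_inner_smul_right, h1]; ring
  have h0 : ⟪u - v, u - v⟫ = 0 := horth _ (hspan ▸ Submodule.mem_top)
  exact sub_eq_zero.mp (inner_self_eq_zero.mp h0)
end

section
/- The Mercedes-Benz frame X = ((0,1), (−√3/2, −1/2), (√3/2, −1/2)) in ℝ² is α-rectifying on the closed unit ball for α ≡ −1/2: for every x with ‖x‖ ≤ 1, the set {x_i : ⟨x, x_i⟩ ≥ −1/2} spans ℝ². -/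
/-!
The three frame vectors are unit vectors summing to zero, so for every `v` the three inner
products `⟪v, x_i⟫` sum to zero while each is at most `‖v‖ ≤ 1`; hence at most one of them
can drop below `-1/2`. Any two frame vectors have inner product `-1/2`, so they are linearly
independent and already span the plane.
-/

open RealInnerProductSpace Module

section ZeroSumUnitTriple

variable {E : Type*} [NormedAddCommGroup E] [InnerProductSpace ℝ E] {a b c : E}

theorem inner_eq_neg_half_of_add_add_eq_zero (habc : a + b + c = 0) (ha : ‖a‖ = 1)
    (hb : ‖b‖ = 1) (hc : ‖c‖ = 1) : ⟪a, b⟫ = -1 / 2 := by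
  have hab : a + b = -c := eq_neg_of_add_eq_zero_left habc
  have := norm_add_sq_real a b
  rw [hab, norm_neg, ha, hb, hc] at this
  linarith

theorem linearIndependent_pair_of_inner_eq_neg_half (ha : ‖a‖ = 1) (hb : ‖b‖ = 1)
    (hab : ⟪a, b⟫ = -1 / 2) : LinearIndependent ℝ ![a, b] := by
  rw [LinearIndependent.pair_iff]
  intro s t hst
  have hs : s - t / 2 = 0 := by
    have := congrArg (⟪a, ·⟫) hst
    simp only [inner_add_right, real_inner_smul_right, real_inner_self_eq_norm_sq, ha, hab,
      inner_zero_right] at this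
    linarith
  have ht : t - s / 2 = 0 := by
    have := congrArg (⟪b, ·⟫) hst
    simp only [inner_add_right, real_inner_smul_right, real_inner_self_eq_norm_sq, hb,
      real_inner_comm a b, hab, inner_zero_right] at this
    linarith
  constructor <;> linarith

theorem neg_half_lt_inner_of_inner_lt_neg_half {v : E} (hv : ‖v‖ ≤ 1) (habc : a + b + c = 0)
    (hc : ‖c‖ = 1) (hva : ⟪v, a⟫ < -1 / 2) : -1 / 2 < ⟪v, b⟫ := by
  have hsum : ⟪v, a⟫ + ⟪v, b⟫ + ⟪v, c⟫ = 0 := by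
    rw [← inner_add_right, ← inner_add_right, habc, inner_zero_right]
  have hvc : ⟪v, c⟫ ≤ 1 :=
    (real_inner_le_norm v c).trans (by rw [hc, mul_one]; exact hv)
  linarith

theorem span_eq_top_of_add_add_eq_zero [FiniteDimensional ℝ E] (hE : finrank ℝ E = 2)
    (habc : a + b + c = 0) (ha : ‖a‖ = 1) (hb : ‖b‖ = 1) (hc : ‖c‖ = 1) {S : Set E}
    (haS : a ∈ S) (hbS : b ∈ S) : Submodule.span ℝ S = ⊤ := by
  have hli := linearIndependent_pair_of_inner_eq_neg_half ha hb
    (inner_eq_neg_half_of_add_add_eq_zero habc ha hb hc)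
  refine eq_top_mono (Submodule.span_mono ?_) (hli.span_eq_top_of_card_eq_finrank' ?_)
  · rintro _ ⟨i, rfl⟩
    fin_cases i
    exacts [haS, hbS]
  · simp [hE]

theorem span_eq_top_of_add_add_eq_zero_of_norm_le_one [FiniteDimensional ℝ E]
    (hE : finrank ℝ E = 2) (habc : a + b + c = 0) (ha : ‖a‖ = 1) (hb : ‖b‖ = 1) (hc : ‖c‖ = 1)
    {v : E} (hv : ‖v‖ ≤ 1) {S : Set E} (haS : -1 / 2 ≤ ⟪v, a⟫ → a ∈ S)
    (hbS : -1 / 2 ≤ ⟪v, b⟫ → b ∈ S) (hcS : -1 / 2 ≤ ⟪v, c⟫ → c ∈ S) :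
    Submodule.span ℝ S = ⊤ := by
  have hbca : b + c + a = 0 := by rw [← habc]; abel
  have hacb : a + c + b = 0 := by rw [← habc]; abel
  by_cases hva : -1 / 2 ≤ ⟪v, a⟫
  · by_cases hvb : -1 / 2 ≤ ⟪v, b⟫
    · exact span_eq_top_of_add_add_eq_zero hE habc ha hb hc (haS hva) (hbS hvb)
    · have hvc := neg_half_lt_inner_of_inner_lt_neg_half hv hbca ha (not_le.mp hvb)
      exact span_eq_top_of_add_add_eq_zero hE hacb ha hc hb (haS hva) (hcS hvc.le)
  · have hvb := neg_half_lt_inner_of_inner_lt_neg_half hv habc hc (not_le.mp hva)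
    have hvc := neg_half_lt_inner_of_inner_lt_neg_half hv hacb hb (not_le.mp hva)
    exact span_eq_top_of_add_add_eq_zero hE hbca hb hc ha (hbS hvb.le) (hcS hvc.le)

end ZeroSumUnitTriple

noncomputable def mercedesBenz (i : Fin 3) : EuclideanSpace ℝ (Fin 2) :=
  WithLp.toLp 2 (![![(0:ℝ), 1], ![-(Real.sqrt 3)/2, -(1:ℝ)/2], ![(Real.sqrt 3)/2, -(1:ℝ)/2]] i)

theorem norm_mercedesBenz (i : Fin 3) : ‖mercedesBenz i‖ = 1 := by
  have h3 : Real.sqrt 3 ^ 2 = 3 := Real.sq_sqrt (by norm_num)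
  rw [EuclideanSpace.norm_eq, Real.sqrt_eq_one]
  fin_cases i <;> simp [mercedesBenz, Fin.sum_univ_two, div_pow, h3] <;> norm_num

theorem mercedesBenz_add_add_eq_zero : mercedesBenz 0 + mercedesBenz 1 + mercedesBenz 2 = 0 := by
  ext j
  fin_cases j <;> simp [mercedesBenz] <;> ring

/-- The Mercedes-Benz frame in `ℝ²` is `α`-rectifying on the closed unit ball for
`α ≡ -1/2`. -/
theorem stmt_6 :
    ∀ v : EuclideanSpace ℝ (Fin 2), ‖v‖ ≤ 1 →
      Submodule.span ℝ
        {w : EuclideanSpace ℝ (Fin 2) |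
          ∃ i : Fin 3,
            w = (WithLp.toLp 2 (![![(0:ℝ), 1], ![-(Real.sqrt 3)/2, -(1:ℝ)/2],
                  ![(Real.sqrt 3)/2, -(1:ℝ)/2]] i) : EuclideanSpace ℝ (Fin 2)) ∧
            ⟪v, w⟫ ≥ -(1:ℝ)/2} = ⊤ := by
  intro v hv
  have hmem (i : Fin 3) (hi : -1 / 2 ≤ ⟪v, mercedesBenz i⟫) :
      mercedesBenz i ∈ {w | ∃ i, w = mercedesBenz i ∧ ⟪v, w⟫ ≥ -(1:ℝ)/2} := ⟨i, rfl, hi⟩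
  exact span_eq_top_of_add_add_eq_zero_of_norm_le_one finrank_euclideanSpace_fin
    mercedesBenz_add_add_eq_zero (norm_mercedesBenz 0) (norm_mercedesBenz 1)
    (norm_mercedesBenz 2) hv (hmem 0) (hmem 1) (hmem 2)
end

section
/- The Tetrahedron frame X = (1/√3)·((1,1,1), (1,−1,−1), (−1,1,−1), (−1,−1,1)) in ℝ³ is α-rectifying on the closed unit ball for α ≡ −1/√3: for every x with ‖x‖ ≤ 1, the set {x_i : ⟨x, x_i⟩ ≥ −1/√3} spans ℝ³. -/
open RealInnerProductSpace

/-! Any two distinct frame vectors satisfy `‖x_i + x_j‖ = 2/√3`, so by Cauchy–Schwarz no `v` in the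
unit ball has `⟪v, x_i⟫ < -1/√3` and `⟪v, x_j⟫ < -1/√3` at once: at most one frame vector is
dropped. Since the four vectors sum to zero, the dropped one is minus the sum of the others, so the
remaining ones still span the span of the whole frame, which is `ℝ³`. -/

theorem Submodule.mem_of_sum_eq_zero {R M ι : Type*} [Ring R] [AddCommGroup M] [Module R M]
    [Fintype ι] [DecidableEq ι] {p : Submodule R M} {f : ι → M} (hsum : ∑ i, f i = 0) {j : ι}
    (h : ∀ i, i ≠ j → f i ∈ p) : f j ∈ p := by
  rw [← Finset.add_sum_erase _ _ (Finset.mem_univ j), add_eq_zero_iff_eq_neg] at hsum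
  rw [hsum]
  exact p.neg_mem (p.sum_mem fun i hi => h i (Finset.ne_of_mem_erase hi))

theorem Submodule.span_setOf_eq_top_of_sum_eq_zero {R M ι : Type*} [Ring R] [AddCommGroup M]
    [Module R M] [Fintype ι] {f : ι → M} (hsum : ∑ i, f i = 0)
    (hspan : Submodule.span R (Set.range f) = ⊤)
    {P : M → Prop} (hP : ∀ i j, ¬P (f i) → ¬P (f j) → i = j) :
    Submodule.span R {w | ∃ i, w = f i ∧ P w} = ⊤ := by
  classical
  have hmem : ∀ i, P (f i) → f i ∈ Submodule.span R {w | ∃ i, w = f i ∧ P w} :=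
    fun i hi => Submodule.subset_span ⟨i, rfl, hi⟩
  rw [eq_top_iff, ← hspan, Submodule.span_le]
  rintro _ ⟨j, rfl⟩
  by_cases hj : P (f j)
  · exact hmem j hj
  · exact Submodule.mem_of_sum_eq_zero hsum fun i hij =>
      hmem i (by_contra fun hi => hij (hP i j hi hj))

theorem neg_le_inner_or_neg_le_inner {F : Type*} [NormedAddCommGroup F] [InnerProductSpace ℝ F]
    {v x y : F} {α : ℝ} (hv : ‖v‖ ≤ 1) (hxy : ‖x + y‖ ≤ 2 * α) :
    -α ≤ ⟪v, x⟫ ∨ -α ≤ ⟪v, y⟫ := by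
  have hcs : -(‖v‖ * ‖x + y‖) ≤ ⟪v, x⟫ + ⟪v, y⟫ := by
    rw [← inner_add_right]
    exact neg_le_of_abs_le (abs_real_inner_le_norm v (x + y))
  have hvxy : ‖v‖ * ‖x + y‖ ≤ ‖x + y‖ := mul_le_of_le_one_left (norm_nonneg _) hv
  by_contra! h
  linarith [h.1, h.2]

noncomputable def tetrahedronFrame (i : Fin 4) : EuclideanSpace ℝ (Fin 3) :=
  WithLp.toLp 2 ((Real.sqrt 3)⁻¹ • ![![(1:ℝ), 1, 1], ![1, -1, -1], ![-1, 1, -1], ![-1, -1, 1]] i)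

theorem inner_tetrahedronFrame (i j : Fin 4) :
    ⟪tetrahedronFrame i, tetrahedronFrame j⟫ = if i = j then 1 else -1 / 3 := by
  have h3 : Real.sqrt 3 ^ 2 = 3 := Real.sq_sqrt (by norm_num)
  rw [PiLp.inner_apply]
  fin_cases i <;> fin_cases j <;>
    simp [tetrahedronFrame, Fin.sum_univ_three] <;> field_simp <;> linarith

theorem sum_tetrahedronFrame : ∑ i, tetrahedronFrame i = 0 := by
  ext k
  fin_cases k <;> simp [tetrahedronFrame, Fin.sum_univ_four]

theorem single_eq_smul_tetrahedronFrame_add (k : Fin 3) :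
    EuclideanSpace.single k (1 : ℝ) =
      (Real.sqrt 3 / 2) • (tetrahedronFrame 0 + tetrahedronFrame k.succ) := by
  have h3 : Real.sqrt 3 ≠ 0 := by positivity
  ext l
  fin_cases k <;> fin_cases l <;> simp [tetrahedronFrame] <;> field_simp <;> norm_num

theorem span_range_tetrahedronFrame : Submodule.span ℝ (Set.range tetrahedronFrame) = ⊤ := by
  rw [eq_top_iff, ← (EuclideanSpace.basisFun (Fin 3) ℝ).toBasis.span_eq, Submodule.span_le]
  rintro _ ⟨k, rfl⟩
  rw [OrthonormalBasis.coe_toBasis, EuclideanSpace.basisFun_apply,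
    single_eq_smul_tetrahedronFrame_add]
  exact Submodule.smul_mem _ _ (Submodule.add_mem _ (Submodule.subset_span ⟨0, rfl⟩)
    (Submodule.subset_span ⟨k.succ, rfl⟩))

theorem norm_tetrahedronFrame_add {i j : Fin 4} (hij : i ≠ j) :
    ‖tetrahedronFrame i + tetrahedronFrame j‖ = 2 * (Real.sqrt 3)⁻¹ := by
  have hsq : ‖tetrahedronFrame i + tetrahedronFrame j‖ ^ 2 = (2 * (Real.sqrt 3)⁻¹) ^ 2 := by
    rw [norm_add_sq_real, ← real_inner_self_eq_norm_sq, ← real_inner_self_eq_norm_sq,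
      inner_tetrahedronFrame, inner_tetrahedronFrame, inner_tetrahedronFrame, if_neg hij,
      mul_pow, inv_pow, Real.sq_sqrt (by norm_num)]
    norm_num
  exact (pow_left_inj₀ (norm_nonneg _) (by positivity) two_ne_zero).1 hsq

/-- The Tetrahedron frame in `ℝ³` is `α`-rectifying on the closed unit ball for
`α ≡ -1/√3`. -/
theorem stmt_7 :
    ∀ v : EuclideanSpace ℝ (Fin 3), ‖v‖ ≤ 1 →
      Submodule.span ℝ
        {w : EuclideanSpace ℝ (Fin 3) |
          ∃ i : Fin 4,
            w = (WithLp.toLp 2 ((Real.sqrt 3)⁻¹ •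
              (![![(1:ℝ), 1, 1], ![1, -1, -1], ![-1, 1, -1], ![-1, -1, 1]] i)) :
                EuclideanSpace ℝ (Fin 3)) ∧
            ⟪v, w⟫ ≥ -(Real.sqrt 3)⁻¹} = ⊤ := by
  intro v hv
  refine Submodule.span_setOf_eq_top_of_sum_eq_zero (f := tetrahedronFrame) sum_tetrahedronFrame
    span_range_tetrahedronFrame fun i j hi hj => ?_
  by_contra hij
  rcases neg_le_inner_or_neg_le_inner hv (norm_tetrahedronFrame_add hij).le with h | h
  exacts [hi h, hj h]
end

section
/- Facet convexity bound: let F be a facet of P = conv{x_1,…,x_m} with ‖x_i‖ = 1 for all i, with vertex set indexed by I_F, and suppose min_{ℓ,k ∈ I_F} ⟨x_ℓ, x_k⟩ ≥ 0. Then for every y ∈ cone(F) ∩ S (the unit sphere) and every i ∈ I_F, ⟨y, x_i⟩ ≥ min_{ℓ ∈ I_F} ⟨x_ℓ, x_i⟩. -/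
open RealInnerProductSpace

/-- Facet convexity bound: if `F` is a facet of a polytope of unit vectors whose
pairwise vertex correlations on `F` are non-negative, then for every unit vector `y` in
the cone over `F` and every vertex `x_i` on `F`, `⟨y, x_i⟩` is at least the minimal
correlation `min_{ℓ ∈ I_F} ⟨x_ℓ, x_i⟩`. -/
theorem stmt_13 (n m : ℕ) (x : Fin m → EuclideanSpace ℝ (Fin n))
    (hnorm : ∀ i, ‖x i‖ = 1)
    (P : Set (EuclideanSpace ℝ (Fin n))) (hP : P = convexHull ℝ (Set.range x))
    (a : EuclideanSpace ℝ (Fin n)) (ha : a ≠ 0) (b : ℝ)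
    (hsupp : ∀ v ∈ P, ⟪a, v⟫ ≤ b)
    (F : Set (EuclideanSpace ℝ (Fin n))) (hF : F = {v ∈ P | ⟪a, v⟫ = b})
    (hdim : Module.finrank ℝ (affineSpan ℝ F).direction = n - 1)
    (IF : Finset (Fin m)) (hIF : IF = {i | x i ∈ F})
    (hne : IF.Nonempty)
    (hpos : ∀ k ∈ IF, ∀ l ∈ IF, 0 ≤ ⟪x k, x l⟫) :
    ∀ y : EuclideanSpace ℝ (Fin n), (∃ t ≥ (0:ℝ), ∃ v ∈ F, y = t • v) → ‖y‖ = 1 →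
      ∀ i ∈ IF, IF.inf' hne (fun l => ⟪x l, x i⟫) ≤ ⟪y, x i⟫ := by
  rintro y ⟨t, ht, v, hvF, rfl⟩ hny i hi
  have hvP : v ∈ P := by rw [hF] at hvF; exact hvF.1
  have hvb : ⟪a, v⟫ = b := by rw [hF] at hvF; exact hvF.2
  have hvP' := hvP
  rw [hP, convexHull_range_eq_exists_affineCombination] at hvP'
  obtain ⟨s, w, hw0, hw1, hv⟩ := hvP'
  rw [Finset.affineCombination_eq_linear_combination _ _ _ hw1] at hv
  set c : Fin m → ℝ := fun j => if j ∈ s then w j else 0 with hc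
  have hc0 : ∀ j, 0 ≤ c j := by
    intro j; simp only [hc]
    split
    · exact hw0 j ‹_›
    · exact le_rfl
  have hc1 : ∑ j, c j = 1 := by
    simp only [hc, Finset.sum_ite_mem, Finset.univ_inter]
    exact hw1
  have hcv : ∑ j, c j • x j = v := by
    rw [← hv]
    simp only [hc, ite_smul, zero_smul, Finset.sum_ite_mem, Finset.univ_inter]
  -- every index with positive weight lies in IF
  have hxP : ∀ j, x j ∈ P := by
    intro j; rw [hP]; exact subset_convexHull ℝ _ ⟨j, rfl⟩
  have hzero : ∀ j ∈ Finset.univ, c j * (b - ⟪a, x j⟫) = 0 := by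
    rw [← Finset.sum_eq_zero_iff_of_nonneg]
    · have : ⟪a, v⟫ = ∑ j, c j * ⟪a, x j⟫ := by
        rw [← hcv, inner_sum]
        simp only [real_inner_smul_right]
      rw [Finset.sum_congr rfl (fun j _ => by ring_nf : ∀ j ∈ Finset.univ,
        c j * (b - ⟪a, x j⟫) = c j * b - c j * ⟪a, x j⟫)]
      rw [Finset.sum_sub_distrib, ← Finset.sum_mul, hc1, ← this, hvb, one_mul, sub_self]
    · intro j _
      exact mul_nonneg (hc0 j) (sub_nonneg.2 (hsupp _ (hxP j)))
  have hmem : ∀ j, c j ≠ 0 → j ∈ IF := by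
    intro j hj
    have h := hzero j (Finset.mem_univ j)
    have hb : ⟪a, x j⟫ = b := by
      rcases mul_eq_zero.1 h with h' | h'
      · exact absurd h' hj
      · linarith [sub_eq_zero.1 h']
    rw [← Finset.mem_coe, hIF, Set.mem_setOf_eq, hF]
    exact ⟨hxP j, hb⟩
  -- norm facts
  have hvnorm : ‖v‖ ≤ 1 := by
    calc ‖v‖ = ‖∑ j, c j • x j‖ := by rw [hcv]
    _ ≤ ∑ j, ‖c j • x j‖ := norm_sum_le _ _
    _ = ∑ j, c j := by
        refine Finset.sum_congr rfl fun j _ => ?_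
        rw [norm_smul, hnorm, mul_one, Real.norm_eq_abs, abs_of_nonneg (hc0 j)]
    _ = 1 := hc1
  have htv : t * ‖v‖ = 1 := by
    rw [← hny, norm_smul, Real.norm_eq_abs, abs_of_nonneg ht]
  have ht1 : 1 ≤ t := by nlinarith [norm_nonneg v]
  -- min is nonneg
  set M := IF.inf' hne (fun l => ⟪x l, x i⟫) with hM
  obtain ⟨l0, hl0, hMe⟩ := IF.exists_mem_eq_inf' hne (fun l => ⟪x l, x i⟫)
  have hM0 : 0 ≤ M := by rw [hM, hMe]; exact hpos l0 hl0 i hi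
  -- main estimate
  have hy : ⟪t • v, x i⟫ = ∑ j, t * c j * ⟪x j, x i⟫ := by
    rw [real_inner_smul_left, ← hcv, sum_inner]
    rw [Finset.mul_sum]
    refine Finset.sum_congr rfl fun j _ => ?_
    rw [real_inner_smul_left]; ring
  rw [hy]
  calc M = M := rfl
  _ ≤ t * M := le_mul_of_one_le_left hM0 ht1
  _ = ∑ j, t * c j * M := by rw [← Finset.sum_mul, ← Finset.mul_sum, hc1, mul_one]
  _ ≤ ∑ j, t * c j * ⟪x j, x i⟫ := by
      refine Finset.sum_le_sum fun j _ => ?_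
      rcases eq_or_ne (c j) 0 with h0 | h0
      · simp [h0]
      · exact mul_le_mul_of_nonneg_left (Finset.inf'_le _ (hmem j h0))
          (mul_nonneg (le_trans zero_le_one ht1) (hc0 j))
end

section
/- Key injectivity step: if C_α x = C_α y for x, y ∈ B_r and x_λ = (1−λ)x + λy for some λ ∈ (0,1), then I_{x_λ}^α ⊆ I_x^α ∩ I_y^α, and moreover ⟨x, x_i⟩ = ⟨y, x_i⟩ for all i ∈ I_x^α ∩ I_y^α. -/
open RealInnerProductSpace

/-- Key injectivity step: if `C_α x = C_α y` then the active index set of any strict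
convex combination `x_λ` is contained in `I_x^α ∩ I_y^α`, and the analysis coefficients
of `x` and `y` agree on `I_x^α ∩ I_y^α`. -/
theorem stmt_18 (n m : ℕ) (x : Fin m → EuclideanSpace ℝ (Fin n)) (α : Fin m → ℝ)
    (u v : EuclideanSpace ℝ (Fin n))
    (h : (fun i => max 0 (⟪u, x i⟫ - α i)) = (fun i => max 0 (⟪v, x i⟫ - α i)))
    (lam : ℝ) (hlam : lam ∈ Set.Ioo (0:ℝ) 1) :
    ({i : Fin m | ⟪(1 - lam) • u + lam • v, x i⟫ ≥ α i} ⊆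
        {i | ⟪u, x i⟫ ≥ α i} ∩ {i | ⟪v, x i⟫ ≥ α i}) ∧
      ∀ i ∈ {i : Fin m | ⟪u, x i⟫ ≥ α i} ∩ {i | ⟪v, x i⟫ ≥ α i},
        ⟪u, x i⟫ = ⟪v, x i⟫ := by
  obtain ⟨hl0, hl1⟩ := hlam
  have hi : ∀ i, max 0 (⟪u, x i⟫ - α i) = max 0 (⟪v, x i⟫ - α i) :=
    fun i => congrFun h i
  constructor
  · intro i hi'
    have hcomb : (1 - lam) * ⟪u, x i⟫ + lam * ⟪v, x i⟫ ≥ α i := by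
      have := hi'
      simp only [Set.mem_setOf_eq, inner_add_left, real_inner_smul_left] at this
      linarith
    have key := hi i
    set a := ⟪u, x i⟫ with ha
    set b := ⟪v, x i⟫ with hb
    constructor <;> simp only [Set.mem_setOf_eq, ← ha, ← hb]
    all_goals {
      rcases le_or_gt (α i) a with hA | hA
      · rcases le_or_gt (α i) b with hB | hB
        · first | exact hA | exact hB
        · -- b < α i, a ≥ α i: max eq gives a - α = max 0 (b - α) = 0, so a = α
          have hb0 : max 0 (b - α i) = 0 := by
            simp [max_eq_left, sub_nonpos.mpr hB.le]
          have : max 0 (a - α i) = a - α i := max_eq_right (by linarith)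
          have haα : a = α i := by
            rw [this, hb0] at key; linarith
          nlinarith
      · -- a < α i: max 0 (a-α) = 0 so b ≤ α, contradiction with hcomb
        have ha0 : max 0 (a - α i) = 0 := by
          simp [max_eq_left, sub_nonpos.mpr hA.le]
        have hbα : b ≤ α i := by
          by_contra hc
          push_neg at hc
          have : max 0 (b - α i) = b - α i := max_eq_right (by linarith)
          rw [ha0, this] at key; linarith
        nlinarith }
  · rintro i ⟨hu, hv⟩
    simp only [Set.mem_setOf_eq] at hu hv
    have key := hi i
    rw [max_eq_right (by linarith), max_eq_right (by linarith)] at key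
    linarith
end

section
/- If X = (x_1,…,x_m) ⊆ ℝ^n consists of unit vectors, 0 ∈ int(conv X), and α ∈ ℝ^m satisfies: for every facet F_j of conv X and every i ∈ I_{F_j}, α_i ≤ min{⟨y, x_i⟩ : y ∈ cone(F_j) ∩ B}, then X is α-rectifying on the closed unit ball B (for every x ∈ B the active set {x_i : ⟨x,x_i⟩ ≥ α_i} spans ℝ^n). -/
/-!
Write `v = t • w` with `t ≥ 0` and `w` on the boundary of `P` (rescale `v` by the gauge of `P`);
then `w` lies on a facet `F_j`, and the hypothesis on `α` makes every vertex `x_i ∈ F_j` active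
at `v`. These vertices span: the exposed face `F_j` of the polytope is, by Krein–Milman, the
convex hull of the vertices it contains, and as `F_j` lies in the hyperplane `⟪a_j, ·⟫ = b_j` with
`b_j > 0` (because `0` is interior), the span of `F_j` is strictly larger than its
`(n - 1)`-dimensional direction.
-/

open RealInnerProductSpace

section
variable {E : Type*} [NormedAddCommGroup E] [InnerProductSpace ℝ E]

theorem isExposed_setOf_inner_eq {A : Set E} {a : E} {b : ℝ} (h : ∀ v ∈ A, ⟪a, v⟫ ≤ b) :
    IsExposed ℝ A {v ∈ A | ⟪a, v⟫ = b} := by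
  rintro ⟨v₀, hv₀A, hv₀⟩
  refine ⟨innerSL ℝ a, Set.ext fun v => ?_⟩
  simp only [innerSL_apply_apply, Set.mem_ofPred_eq, and_congr_right_iff]
  intro hv
  exact ⟨fun hvb y hy => hvb ▸ h y hy,
    fun hmax => le_antisymm (h v hv) (hv₀ ▸ hmax v₀ hv₀A)⟩

theorem IsExposed.subset_convexHull_inter {s B : Set E} (hs : s.Finite)
    (hB : IsExposed ℝ (convexHull ℝ s) B) : B ⊆ convexHull ℝ (B ∩ s) := by
  have hBcompact : IsCompact B := hB.isCompact (hs.isCompact_convexHull (𝕜 := ℝ))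
  calc B = closure (convexHull ℝ (B.extremePoints ℝ)) :=
        (closure_convexHull_extremePoints hBcompact (hB.convex (convex_convexHull ℝ s))).symm
    _ ⊆ closure (convexHull ℝ (B ∩ s)) := by
        refine closure_mono (convexHull_mono fun v hv => ⟨hv.1, ?_⟩)
        exact extremePoints_convexHull_subset (hB.isExtreme.extremePoints_subset_extremePoints hv)
    _ = convexHull ℝ (B ∩ s) :=
        ((hs.inter_of_right B).isCompact_convexHull (𝕜 := ℝ)).isClosed.closure_eq

theorem pos_of_inner_le_of_mem_nhds {s : Set E} (hs : s ∈ nhds 0) {a : E} (ha : a ≠ 0) {b : ℝ}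
    (h : ∀ v ∈ s, ⟪a, v⟫ ≤ b) : 0 < b := by
  have hsmall : ∀ᶠ ε in nhds (0 : ℝ), ε • a ∈ s :=
    ((continuous_id.smul continuous_const).tendsto' 0 0 (zero_smul ℝ a)).eventually hs
  obtain ⟨ε, hεs, hε⟩ := ((hsmall.filter_mono nhdsWithin_le_nhds).and
    (self_mem_nhdsWithin (s := Set.Ioi 0))).exists
  calc 0 < ε * ‖a‖ ^ 2 := mul_pos hε (by positivity)
    _ = ⟪a, ε • a⟫ := by rw [real_inner_smul_right, real_inner_self_eq_norm_sq]
    _ ≤ b := h _ hεs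

theorem span_eq_top_of_subset_inner_eq [FiniteDimensional ℝ E] {s : Set E} {a : E} {b : ℝ}
    (hs : s ⊆ {v | ⟪a, v⟫ = b}) (hb : b ≠ 0) {w : E} (hw : w ∈ s)
    (hdim : Module.finrank ℝ (vectorSpan ℝ s) = Module.finrank ℝ E - 1) :
    Submodule.span ℝ s = ⊤ := by
  have hker : vectorSpan ℝ s ≤ LinearMap.ker (innerₛₗ ℝ a) := by
    rw [vectorSpan_def, Submodule.span_le]
    rintro _ ⟨u, hu, v, hv, rfl⟩
    have hu' : ⟪a, u⟫ = b := hs hu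
    have hv' : ⟪a, v⟫ = b := hs hv
    simp [inner_sub_right, hu', hv']
  have hw_notMem : w ∉ vectorSpan ℝ s := fun h => hb <| by
    have hw' : ⟪a, w⟫ = b := hs hw
    simpa [hw'] using hker h
  have hlt : vectorSpan ℝ s < Submodule.span ℝ s := by
    refine SetLike.lt_iff_le_and_exists.mpr ⟨?_, w, Submodule.subset_span hw, hw_notMem⟩
    rw [vectorSpan_def, Submodule.span_le]
    rintro _ ⟨u, hu, v, hv, rfl⟩
    exact sub_mem (Submodule.subset_span hu) (Submodule.subset_span hv)
  have hpos : 0 < Module.finrank ℝ E :=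
    Module.finrank_pos_iff_exists_ne_zero.mpr ⟨w, fun h => hw_notMem (h ▸ zero_mem _)⟩
  apply Submodule.eq_top_of_finrank_eq
  have := Submodule.finrank_lt_finrank_of_lt hlt
  have := Submodule.finrank_le (Submodule.span ℝ s)
  omega

theorem Convex.exists_mem_frontier_smul_eq [Nontrivial E] {s : Set E} (hconv : Convex ℝ s)
    (hs : s ∈ nhds 0) (hbdd : Bornology.IsBounded s) (v : E) :
    ∃ w ∈ frontier s, ∃ t ≥ (0 : ℝ), v = t • w := by
  have hgauge_pos : ∀ u ≠ (0 : E), 0 < gauge s u := fun u hu =>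
    (gauge_pos (absorbent_nhds_zero hs) (NormedSpace.isVonNBounded_of_isBounded ℝ hbdd)).mpr hu
  have hfrontier : ∀ u ≠ (0 : E), (gauge s u)⁻¹ • u ∈ frontier s := fun u hu => by
    rw [← gauge_eq_one_iff_mem_frontier hconv hs, gauge_smul_of_nonneg (inv_nonneg.mpr
      (hgauge_pos u hu).le), smul_eq_mul, inv_mul_cancel₀ (hgauge_pos u hu).ne']
  rcases eq_or_ne v 0 with rfl | hv
  · obtain ⟨u, hu⟩ := exists_ne (0 : E)
    exact ⟨_, hfrontier u hu, 0, le_rfl, (zero_smul ℝ _).symm⟩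
  · refine ⟨_, hfrontier v hv, gauge s v, (hgauge_pos v hv).le, ?_⟩
    rw [smul_smul, mul_inv_cancel₀ (hgauge_pos v hv).ne', one_smul]

theorem span_inter_facet_eq_top [FiniteDimensional ℝ E] {s : Set E} (hs : s.Finite) {a : E}
    {b : ℝ} (hb : b ≠ 0) (hsupp : ∀ v ∈ convexHull ℝ s, ⟪a, v⟫ ≤ b) {w : E}
    (hw : w ∈ {v ∈ convexHull ℝ s | ⟪a, v⟫ = b})
    (hdim : Module.finrank ℝ (vectorSpan ℝ {v ∈ convexHull ℝ s | ⟪a, v⟫ = b}) =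
      Module.finrank ℝ E - 1) :
    Submodule.span ℝ ({v ∈ convexHull ℝ s | ⟪a, v⟫ = b} ∩ s) = ⊤ := by
  have hface := (isExposed_setOf_inner_eq hsupp).subset_convexHull_inter hs
  refine top_unique ?_
  rw [← span_eq_top_of_subset_inner_eq (fun v hv => hv.2) hb hw hdim, Submodule.span_le]
  exact hface.trans (convexHull_min Submodule.subset_span (Submodule.convex _))

end

theorem stmt_19_general (n m J : ℕ) (x : Fin m → EuclideanSpace ℝ (Fin n))
    (P : Set (EuclideanSpace ℝ (Fin n))) (hP : P = convexHull ℝ (Set.range x))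
    (h0 : (0 : EuclideanSpace ℝ (Fin n)) ∈ interior P)
    (F : Fin J → Set (EuclideanSpace ℝ (Fin n)))
    (a : Fin J → EuclideanSpace ℝ (Fin n)) (b : Fin J → ℝ)
    (ha : ∀ j, a j ≠ 0)
    (hsupp : ∀ j, ∀ v ∈ P, ⟪a j, v⟫ ≤ b j)
    (hFdef : ∀ j, F j = {v ∈ P | ⟪a j, v⟫ = b j})
    (hdim : ∀ j, Module.finrank ℝ (affineSpan ℝ (F j)).direction = n - 1)
    (hbd : frontier P = ⋃ j, F j)
    (α : Fin m → ℝ)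
    (hα : ∀ j, ∀ i, x i ∈ F j →
      ∀ y : EuclideanSpace ℝ (Fin n), (∃ t ≥ (0:ℝ), ∃ v ∈ F j, y = t • v) → ‖y‖ ≤ 1 →
        α i ≤ ⟪y, x i⟫) :
    ∀ v : EuclideanSpace ℝ (Fin n), ‖v‖ ≤ 1 →
      Submodule.span ℝ {w | ∃ i, w = x i ∧ ⟪v, x i⟫ ≥ α i} = ⊤ := by
  intro v hv
  rcases subsingleton_or_nontrivial (EuclideanSpace ℝ (Fin n)) with hE | hE
  · exact Subsingleton.elim _ _
  have hPnhds : P ∈ nhds 0 := mem_interior_iff_mem_nhds.mp h0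
  have hPconv : Convex ℝ P := hP ▸ convex_convexHull ℝ _
  have hPbdd : Bornology.IsBounded P :=
    (hP ▸ (Set.finite_range x).isCompact_convexHull (𝕜 := ℝ)).isBounded
  obtain ⟨w, hw, t, ht, rfl⟩ := hPconv.exists_mem_frontier_smul_eq hPnhds hPbdd v
  obtain ⟨j, hj⟩ := Set.mem_iUnion.mp (hbd ▸ hw)
  have hb : b j ≠ 0 := (pos_of_inner_le_of_mem_nhds hPnhds (ha j) (hsupp j)).ne'
  subst hP
  have hspan := span_inter_facet_eq_top (Set.finite_range x) hb (hsupp j) (hFdef j ▸ hj)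
    (by rw [← hFdef j, ← direction_affineSpan, hdim j, finrank_euclideanSpace_fin])
  refine top_unique (hspan ▸ Submodule.span_mono ?_)
  rintro _ ⟨hxF, i, rfl⟩
  exact ⟨i, rfl, hα j i (hFdef j ▸ hxF) _ ⟨t, ht, w, hj, rfl⟩ hv⟩

/-- Polytope bias estimation: if `X` consists of unit vectors, `0` lies in the interior
of `P = conv X` (omnidirectionality), the facets `F_1,…,F_J` of `P` (cut out by
supporting hyperplanes, covering the boundary of `P`) satisfy
`α_i ≤ min {⟨y, x_i⟩ : y ∈ cone(F_j) ∩ B}` for every vertex `x_i` on `F_j`, then `X` is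
`α`-rectifying on the closed unit ball. -/
theorem stmt_19 (n m J : ℕ) (x : Fin m → EuclideanSpace ℝ (Fin n))
    (hnorm : ∀ i, ‖x i‖ = 1)
    (P : Set (EuclideanSpace ℝ (Fin n))) (hP : P = convexHull ℝ (Set.range x))
    (h0 : (0 : EuclideanSpace ℝ (Fin n)) ∈ interior P)
    (F : Fin J → Set (EuclideanSpace ℝ (Fin n)))
    (a : Fin J → EuclideanSpace ℝ (Fin n)) (b : Fin J → ℝ)
    (ha : ∀ j, a j ≠ 0)
    (hsupp : ∀ j, ∀ v ∈ P, ⟪a j, v⟫ ≤ b j)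
    (hFdef : ∀ j, F j = {v ∈ P | ⟪a j, v⟫ = b j})
    (hdim : ∀ j, Module.finrank ℝ (affineSpan ℝ (F j)).direction = n - 1)
    (hbd : frontier P = ⋃ j, F j)
    (α : Fin m → ℝ)
    (hα : ∀ j, ∀ i, x i ∈ F j →
      ∀ y : EuclideanSpace ℝ (Fin n), (∃ t ≥ (0:ℝ), ∃ v ∈ F j, y = t • v) → ‖y‖ ≤ 1 →
        α i ≤ ⟪y, x i⟫) :
    ∀ v : EuclideanSpace ℝ (Fin n), ‖v‖ ≤ 1 →
      Submodule.span ℝ {w | ∃ i, w = x i ∧ ⟪v, x i⟫ ≥ α i} = ⊤ :=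
  stmt_19_general n m J x P hP h0 F a b ha hsupp hFdef hdim hbd α hα
end
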